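/- arXiv:1307.7534 — 2 statements merged into one kernel-verified Lean document; each statement's English description precedes it below -/
import Mathlib

section
/- Every δ-PotLLL reduced basis is δ-LLL reduced. That is, if B = [b_1,…,b_n] is size-reduced and satisfies δ·Pot(B) ≤ Pot(σ_{k,ℓ} B) for all 1 ≤ k < ℓ ≤ n, then B satisfies the Lovász condition δ·‖π_k(b_k)‖² ≤ ‖π_k(b_{k+1})‖² for all 1 ≤ k < n. -/
/-!
For `L = K + 1` the deep insertion `σ_{K,L}` is the transposition of `b_K` and `b_L`. It leaves
every `b_i^*` with `i ∉ {K, L}` unchanged, and it preserves `‖b_K^*‖ ‖b_L^*‖`: both equal the area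
of the parallelogram spanned by the projections of `b_K` and `b_L` orthogonally to
`b_0, …, b_{K-1}`. Hence `Pot(σB) / Pot(B) = ‖π_K(b_L)‖² / ‖π_K(b_K)‖²`, and `δ Pot(B) ≤ Pot(σB)`
is the Lovász condition at `K`.
-/

open Finset

/-- π_j : orthogonal projection onto the orthogonal complement of span{b_0,…,b_{j-1}}. -/
noncomputable def projPerp {n m : ℕ} (b : Fin n → EuclideanSpace ℝ (Fin m)) (j : ℕ)
    (x : EuclideanSpace ℝ (Fin m)) : EuclideanSpace ℝ (Fin m) :=
  x - (Submodule.orthogonalProjection (Submodule.span ℝ (b '' {i | (i : ℕ) < j})) x : EuclideanSpace ℝ (Fin m))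

/-- The Gram–Schmidt vector b_i^* = π_i(b_i). -/
noncomputable def bstar {n m : ℕ} (b : Fin n → EuclideanSpace ℝ (Fin m)) (i : Fin n) :
    EuclideanSpace ℝ (Fin m) :=
  projPerp b i.val (b i)

/-- The potential Pot(B) = ∏ ‖b_i^*‖^{2(n-i+1)} (1-based), i.e. ∏ ‖b_i^*‖^{2(n-i)} (0-based). -/
noncomputable def Pot {n m : ℕ} (b : Fin n → EuclideanSpace ℝ (Fin m)) : ℝ :=
  ∏ i : Fin n, ‖bstar b i‖ ^ (2 * (n - i.val))

/-- Gram–Schmidt coefficient μ_{i,j} = ⟨b_i, b_j^*⟩ / ⟨b_j^*, b_j^*⟩. -/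
noncomputable def mu {n m : ℕ} (b : Fin n → EuclideanSpace ℝ (Fin m)) (i j : Fin n) : ℝ :=
  (inner ℝ (b i) (bstar b j) : ℝ) / (inner ℝ (bstar b j) (bstar b j) : ℝ)

/-- Size-reduced: |μ_{i,j}| ≤ 1/2 for all j < i. -/
def SizeReduced {n m : ℕ} (b : Fin n → EuclideanSpace ℝ (Fin m)) : Prop :=
  ∀ i j : Fin n, j < i → |mu b i j| ≤ 1/2

/-- The deep-insertion reordering σ_{k,ℓ}B = [b_1,…,b_{k-1}, b_ℓ, b_k,…,b_{ℓ-1}, b_{ℓ+1},…,b_n]. -/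
def insertFam {n : ℕ} {α : Type*} (b : Fin n → α) (k l : Fin n) : Fin n → α :=
  fun i => if i.val < k.val ∨ l.val < i.val then b i
    else if i = k then b l
    else b ⟨i.val - 1, lt_of_le_of_lt (Nat.sub_le _ _) i.isLt⟩

open scoped RealInnerProductSpace

section Geometry

variable {E : Type*} [NormedAddCommGroup E] [InnerProductSpace ℝ E]

theorem norm_sq_mul_norm_sq_sub_inner_sq_of_eq_smul_add {u v w : E} {t : ℝ}
    (huw : ⟪u, w⟫ = 0) (hv : v = t • u + w) :
    ‖u‖ ^ 2 * ‖v‖ ^ 2 - ⟪u, v⟫ ^ 2 = ‖u‖ ^ 2 * ‖w‖ ^ 2 := by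
  have huv : ⟪u, v⟫ = t * ‖u‖ ^ 2 := by
    rw [hv, inner_add_right, real_inner_smul_right, huw, real_inner_self_eq_norm_sq, add_zero]
  have hvv : ‖v‖ ^ 2 = t ^ 2 * ‖u‖ ^ 2 + ‖w‖ ^ 2 := by
    rw [hv, norm_add_sq_real, real_inner_smul_left, huw, norm_smul, mul_pow, Real.norm_eq_abs,
      sq_abs]
    ring
  rw [huv, hvv]
  ring

variable (K : Submodule ℝ E) [K.HasOrthogonalProjection]

theorem Submodule.exists_eq_smul_sub_starProjection {x a : E} (ha : a ∈ K ⊔ ℝ ∙ x)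
    (ha' : a ∈ Kᗮ) : ∃ t : ℝ, a = t • (x - K.starProjection x) := by
  obtain ⟨k, hk, _, hy, rfl⟩ := Submodule.mem_sup.mp ha
  obtain ⟨t, rfl⟩ := Submodule.mem_span_singleton.mp hy
  refine ⟨t, eq_of_sub_eq_zero ?_⟩
  have hK : k + t • x - t • (x - K.starProjection x) ∈ K := by
    rw [show k + t • x - t • (x - K.starProjection x) = k + t • K.starProjection x by
      rw [smul_sub]; abel]
    exact K.add_mem hk (K.smul_mem t (K.starProjection_apply_mem x))
  have hKperp : k + t • x - t • (x - K.starProjection x) ∈ Kᗮ :=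
    Kᗮ.sub_mem ha' (Kᗮ.smul_mem t (K.sub_starProjection_mem_orthogonal x))
  exact Submodule.disjoint_def.mp K.orthogonal_disjoint _ hK hKperp

/-- The right-hand side is the Gram determinant of the projections of `x` and `y` onto `Kᗮ`,
which is symmetric in `x` and `y`. -/
theorem Submodule.norm_sub_starProjection_sup_sq_eq (x y : E)
    [(K ⊔ ℝ ∙ x).HasOrthogonalProjection] :
    ‖x - K.starProjection x‖ ^ 2 * ‖y - (K ⊔ ℝ ∙ x).starProjection y‖ ^ 2 =
      ‖x - K.starProjection x‖ ^ 2 * ‖y - K.starProjection y‖ ^ 2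
        - ⟪x - K.starProjection x, y - K.starProjection y⟫ ^ 2 := by
  set K' := K ⊔ ℝ ∙ x
  set u := x - K.starProjection x
  set w := y - K'.starProjection y
  have hu : u ∈ K' :=
    K'.sub_mem (Submodule.mem_sup_right (Submodule.mem_span_singleton_self x))
      (Submodule.mem_sup_left (K.starProjection_apply_mem x))
  have hw : w ∈ Kᗮ := Submodule.orthogonal_le le_sup_left (K'.sub_starProjection_mem_orthogonal y)
  obtain ⟨t, ht⟩ := K.exists_eq_smul_sub_starProjection
    (a := y - K.starProjection y - w)
    (by rw [sub_sub_sub_cancel_left]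
        exact K'.sub_mem (K'.starProjection_apply_mem y)
          (Submodule.mem_sup_left (K.starProjection_apply_mem y)))
    (Kᗮ.sub_mem (K.sub_starProjection_mem_orthogonal y) hw)
  refine (norm_sq_mul_norm_sq_sub_inner_sq_of_eq_smul_add ?_ (sub_eq_iff_eq_add.mp ht)).symm
  exact K'.sub_starProjection_mem_orthogonal y u hu

theorem Submodule.norm_sub_starProjection_sup_sq_symm (x y : E)
    [(K ⊔ ℝ ∙ x).HasOrthogonalProjection] [(K ⊔ ℝ ∙ y).HasOrthogonalProjection] :
    ‖x - K.starProjection x‖ ^ 2 * ‖y - (K ⊔ ℝ ∙ x).starProjection y‖ ^ 2 =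
      ‖y - K.starProjection y‖ ^ 2 * ‖x - (K ⊔ ℝ ∙ y).starProjection x‖ ^ 2 := by
  rw [K.norm_sub_starProjection_sup_sq_eq, K.norm_sub_starProjection_sup_sq_eq, real_inner_comm]
  ring

end Geometry

section GramSchmidt

variable {n m : ℕ} (b : Fin n → EuclideanSpace ℝ (Fin m))

theorem projPerp_eq_sub_starProjection (j : ℕ) (x : EuclideanSpace ℝ (Fin m)) :
    projPerp b j x = x - (Submodule.span ℝ (b '' {i | (i : ℕ) < j})).starProjection x :=
  rfl

theorem projPerp_succ (i : Fin n) (x : EuclideanSpace ℝ (Fin m)) :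
    projPerp b (i + 1) x =
      x - (Submodule.span ℝ (b '' {j | (j : ℕ) < i}) ⊔ ℝ ∙ b i).starProjection x := by
  have hset : {j : Fin n | (j : ℕ) < i + 1} = insert i {j : Fin n | (j : ℕ) < i} := by
    ext j
    simp only [Set.mem_ofPred_eq, Set.mem_insert_iff, Nat.lt_succ_iff_lt_or_eq, Fin.ext_iff]
    tauto
  rw [projPerp_eq_sub_starProjection, hset, Set.image_insert_eq, Submodule.span_insert, sup_comm]

theorem bstar_ne_zero (hb : LinearIndependent ℝ b) (i : Fin n) : bstar b i ≠ 0 := by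
  intro h
  have hmem : b i ∈ Submodule.span ℝ (b '' {j | (j : ℕ) < i}) := by
    rw [sub_eq_zero.mp h]
    exact Submodule.starProjection_apply_mem _ _
  exact hb.notMem_span_image (by simp) hmem

theorem Pot_pos (hb : LinearIndependent ℝ b) : 0 < Pot b :=
  Finset.prod_pos fun i _ => pow_pos (norm_pos_iff.mpr (bstar_ne_zero b hb i)) _

end GramSchmidt

section AdjacentSwap

variable {n m : ℕ} {K L : Fin n}

theorem insertFam_eq_comp_swap {α : Type*} (b : Fin n → α) (hKL : (L : ℕ) = K + 1) :
    insertFam b K L = b ∘ Equiv.swap K L := by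
  funext i
  simp only [insertFam, Function.comp, Equiv.swap_apply_def]
  split_ifs <;> first | rfl | (congr 1; ext; simp only [Fin.ext_iff] at *; omega)

theorem swap_image_setOf_val_lt (hKL : (L : ℕ) = K + 1) {j : ℕ} (hj : j ≠ L) :
    Equiv.swap K L '' {i : Fin n | (i : ℕ) < j} = {i : Fin n | (i : ℕ) < j} := by
  rw [Equiv.image_eq_preimage_symm, Equiv.symm_swap]
  ext i
  simp only [Set.mem_preimage, Set.mem_ofPred_eq, Equiv.swap_apply_def]
  split_ifs <;> omega

variable (b : Fin n → EuclideanSpace ℝ (Fin m))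

theorem projPerp_comp_swap (hKL : (L : ℕ) = K + 1) {j : ℕ} (hj : j ≠ L) :
    projPerp (b ∘ Equiv.swap K L) j = projPerp b j := by
  funext x
  rw [projPerp_eq_sub_starProjection, Set.image_comp, swap_image_setOf_val_lt hKL hj]
  rfl

theorem bstar_comp_swap_of_ne (hKL : (L : ℕ) = K + 1) {i : Fin n} (hiK : i ≠ K) (hiL : i ≠ L) :
    bstar (b ∘ Equiv.swap K L) i = bstar b i := by
  rw [bstar, projPerp_comp_swap b hKL (Fin.val_ne_of_ne hiL), Function.comp_apply,
    Equiv.swap_apply_of_ne_of_ne hiK hiL, bstar]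

theorem bstar_comp_swap_left (hKL : (L : ℕ) = K + 1) :
    bstar (b ∘ Equiv.swap K L) K = projPerp b K (b L) := by
  rw [bstar, projPerp_comp_swap b hKL (by omega), Function.comp_apply, Equiv.swap_apply_left]

theorem norm_bstar_comp_swap_sq_mul (hKL : (L : ℕ) = K + 1) :
    ‖bstar (b ∘ Equiv.swap K L) K‖ ^ 2 * ‖bstar (b ∘ Equiv.swap K L) L‖ ^ 2 =
      ‖bstar b K‖ ^ 2 * ‖bstar b L‖ ^ 2 := by
  have hL (f : Fin n → EuclideanSpace ℝ (Fin m)) : bstar f L = projPerp f (K + 1) (f L) := by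
    rw [bstar, hKL]
  rw [bstar_comp_swap_left b hKL, hL, hL, projPerp_succ, projPerp_succ, Set.image_comp,
    swap_image_setOf_val_lt hKL (by omega)]
  simp only [Function.comp_apply, Equiv.swap_apply_left, Equiv.swap_apply_right]
  exact (Submodule.norm_sub_starProjection_sup_sq_symm _ _ _).symm

theorem Pot_comp_swap_mul (hKL : (L : ℕ) = K + 1) :
    Pot (b ∘ Equiv.swap K L) * ‖bstar b K‖ ^ 2 = ‖bstar (b ∘ Equiv.swap K L) K‖ ^ 2 * Pot b := by
  have hsplit (f : Fin n → EuclideanSpace ℝ (Fin m)) : Pot f =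
      (‖bstar f K‖ ^ 2) ^ (n - L + 1) * (‖bstar f L‖ ^ 2) ^ (n - L) *
        ∏ i ∈ (univ.erase K).erase L, ‖bstar f i‖ ^ (2 * (n - i)) := by
    rw [Pot, ← mul_prod_erase univ _ (mem_univ K),
      ← mul_prod_erase (univ.erase K) _ (mem_erase.mpr ⟨by omega, mem_univ L⟩),
      show n - K = n - L + 1 by omega]
    ring
  set b' := b ∘ Equiv.swap K L
  have hrest : ∏ i ∈ (univ.erase K).erase L, ‖bstar b' i‖ ^ (2 * (n - i)) =
      ∏ i ∈ (univ.erase K).erase L, ‖bstar b i‖ ^ (2 * (n - i)) :=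
    prod_congr rfl fun i hi => by
      rw [bstar_comp_swap_of_ne b hKL (ne_of_mem_erase (mem_of_mem_erase hi)) (ne_of_mem_erase hi)]
  set R := ∏ i ∈ (univ.erase K).erase L, ‖bstar b i‖ ^ (2 * (n - i))
  rw [hsplit, hsplit b, hrest]
  calc _ = ‖bstar b' K‖ ^ 2 * (‖bstar b' K‖ ^ 2 * ‖bstar b' L‖ ^ 2) ^ (n - L) * R *
        ‖bstar b K‖ ^ 2 := by ring
    _ = _ := by rw [norm_bstar_comp_swap_sq_mul b hKL]; ring

end AdjacentSwap

theorem potLLL_is_LLL_general {n m : ℕ} (b : Fin n → EuclideanSpace ℝ (Fin m))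
    (hLI : LinearIndependent ℝ b) (δ : ℝ)
    (hpot : ∀ k l : Fin n, k < l → δ * Pot b ≤ Pot (insertFam b k l)) :
    ∀ k : ℕ, (hk : k + 1 < n) →
      δ * ‖projPerp b k (b ⟨k, Nat.lt_of_succ_lt hk⟩)‖ ^ 2 ≤
        ‖projPerp b k (b ⟨k + 1, hk⟩)‖ ^ 2 := by
  intro k hk
  set K : Fin n := ⟨k, Nat.lt_of_succ_lt hk⟩
  set L : Fin n := ⟨k + 1, hk⟩
  have hKL : (L : ℕ) = K + 1 := rfl
  have hswap := hpot K L (Fin.mk_lt_mk.mpr k.lt_succ_self)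
  rw [insertFam_eq_comp_swap b hKL] at hswap
  have hPot := Pot_comp_swap_mul b hKL
  rw [bstar_comp_swap_left b hKL] at hPot
  change δ * ‖bstar b K‖ ^ 2 ≤ ‖projPerp b K (b L)‖ ^ 2
  refine le_of_mul_le_mul_right ?_ (Pot_pos b hLI)
  calc δ * ‖bstar b K‖ ^ 2 * Pot b = δ * Pot b * ‖bstar b K‖ ^ 2 := by ring
    _ ≤ Pot (b ∘ Equiv.swap K L) * ‖bstar b K‖ ^ 2 := mul_le_mul_of_nonneg_right hswap (sq_nonneg _)
    _ = _ := hPot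

/-- a δ-PotLLL reduced basis is δ-LLL reduced. -/
theorem potLLL_is_LLL {n m : ℕ} (b : Fin n → EuclideanSpace ℝ (Fin m))
    (hLI : LinearIndependent ℝ b) (δ : ℝ) (hδ1 : 1/4 < δ) (hδ2 : δ ≤ 1)
    (hsize : SizeReduced b)
    (hpot : ∀ k l : Fin n, k < l → δ * Pot b ≤ Pot (insertFam b k l)) :
    ∀ k : ℕ, (hk : k + 1 < n) →
      δ * ‖projPerp b k (b ⟨k, Nat.lt_of_succ_lt hk⟩)‖ ^ 2 ≤
        ‖projPerp b k (b ⟨k + 1, hk⟩)‖ ^ 2 :=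
  potLLL_is_LLL_general b hLI δ hpot
end

section
/- The quotient P_{j,ℓ} := Pot(σ_{j,ℓ} B)/Pot(B) satisfies the recursion P_{ℓ,ℓ} = 1 and, for j < ℓ, P_{j,ℓ} = P_{j+1,ℓ} · (‖b_ℓ^*‖² + ∑_{i=j}^{ℓ−1} μ_{ℓ,i}² ‖b_i^*‖²) / ‖b_j^*‖². -/
open Finset


/-! Swapping positions `j` and `j + 1` of `σ_{j+1,ℓ} B` gives `σ_{j,ℓ} B`. Write `Pot` as the
product of the Gram determinants of the prefixes `b_0, …, b_k`: an adjacent swap only permutes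
the vectors inside every prefix except the one of length `j + 1`, and the Gram–Schmidt vectors
before position `j` do not change, so the two potentials differ by the factor
`‖π_j(b_ℓ)‖² / ‖b_j^*‖²` coming from the `j`-th Gram–Schmidt vector. Expanding `π_j(b_ℓ)` in the
orthogonal vectors `b_i^*`, `j ≤ i ≤ ℓ`, gives its squared length. -/

open Submodule InnerProductSpace RealInnerProductSpace

section Orthogonal

variable {ι E : Type*} [NormedAddCommGroup E] [InnerProductSpace ℝ E]

theorem mem_orthogonal_span_of_forall_inner_eq_zero {s : Set E} {x : E}
    (h : ∀ u ∈ s, ⟪u, x⟫ = 0) : x ∈ (span ℝ s)ᗮ :=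
  (isOrtho_span.2 fun _ hu _ hv => (Set.mem_singleton_iff.1 hv) ▸ h _ hu).symm
    (mem_span_singleton_self x)

theorem inner_sum_smul_of_pairwise_inner_eq_zero {v : ι → E}
    (hv : Pairwise fun i j => ⟪v i, v j⟫ = 0) (c : ι → ℝ) {s : Finset ι} {x : ι} (hx : x ∈ s) :
    ⟪v x, ∑ i ∈ s, c i • v i⟫ = c x * ‖v x‖ ^ 2 := by
  rw [inner_sum, sum_eq_single_of_mem x hx fun i _ hix => by rw [inner_smul_right, hv hix.symm,
    mul_zero], inner_smul_right, real_inner_self_eq_norm_sq]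

theorem inner_sum_smul_of_pairwise_inner_eq_zero_of_notMem {v : ι → E}
    (hv : Pairwise fun i j => ⟪v i, v j⟫ = 0) (c : ι → ℝ) {s : Finset ι} {x : ι} (hx : x ∉ s) :
    ⟪v x, ∑ i ∈ s, c i • v i⟫ = 0 := by
  rw [inner_sum]
  exact sum_eq_zero fun i hi => by rw [inner_smul_right, hv (ne_of_mem_of_not_mem hi hx).symm,
    mul_zero]

theorem norm_sq_sum_smul_of_pairwise_inner_eq_zero {v : ι → E}
    (hv : Pairwise fun i j => ⟪v i, v j⟫ = 0) (c : ι → ℝ) (s : Finset ι) :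
    ‖∑ i ∈ s, c i • v i‖ ^ 2 = ∑ i ∈ s, c i ^ 2 * ‖v i‖ ^ 2 := by
  rw [← real_inner_self_eq_norm_sq, sum_inner]
  refine sum_congr rfl fun x hx => ?_
  rw [inner_smul_left, inner_sum_smul_of_pairwise_inner_eq_zero hv c hx, conj_trivial]
  ring

end Orthogonal

section GramSchmidt

variable {ι E : Type*} [LinearOrder ι] [LocallyFiniteOrderBot ι] [WellFoundedLT ι]
  [NormedAddCommGroup E] [InnerProductSpace ℝ E] [FiniteDimensional ℝ E]

local notation "g" => gramSchmidt ℝ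

theorem starProjection_span_image_Iio (f : ι → E) (j : ι) (v : E) :
    (span ℝ (f '' Set.Iio j)).starProjection v =
      ∑ i ∈ Iio j, (⟪g f i, v⟫ / ‖g f i‖ ^ 2) • g f i := by
  rw [← span_gramSchmidt_Iio ℝ f j]
  refine eq_starProjection_of_mem_orthogonal
    (sum_mem fun i hi => smul_mem _ _ (subset_span ⟨i, mem_Iio.1 hi, rfl⟩))
    (mem_orthogonal_span_of_forall_inner_eq_zero ?_)
  rintro _ ⟨x, hx, rfl⟩
  rw [inner_sub_right, inner_sum_smul_of_pairwise_inner_eq_zero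
    (gramSchmidt_pairwise_orthogonal ℝ f) _ (mem_Iio.2 hx), sub_eq_zero,
    div_mul_cancel_of_imp fun h => by rw [norm_eq_zero.1 (pow_eq_zero_iff two_ne_zero |>.1 h),
      inner_zero_left]]

theorem gramSchmidt_eq_sub_starProjection (f : ι → E) (i : ι) :
    g f i = f i - (span ℝ (f '' Set.Iio i)).starProjection (f i) := by
  rw [starProjection_span_image_Iio, eq_sub_iff_add_eq]
  simpa using (gramSchmidt_def'' ℝ f i).symm

theorem sub_starProjection_span_image_Iio [LocallyFiniteOrder ι] (f : ι → E) {j l : ι}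
    (hjl : j ≤ l) :
    f l - (span ℝ (f '' Set.Iio j)).starProjection (f l) =
      g f l + ∑ i ∈ Ico j l, (⟪g f i, f l⟫ / ‖g f i‖ ^ 2) • g f i := by
  have hsplit : Iio l = Iio j ∪ Ico j l := by
    ext i
    simp only [mem_union, mem_Iio, mem_Ico]
    exact ⟨fun h => (lt_or_ge i j).imp_right fun hji => ⟨hji, h⟩,
      fun h => h.elim (·.trans_le hjl) And.right⟩
  have hdisj : Disjoint (Iio j) (Ico j l) :=
    disjoint_left.2 fun i hi hi' => not_le.2 (mem_Iio.1 hi) (mem_Ico.1 hi').1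
  have hfl : f l = g f l + ∑ i ∈ Iio l, (⟪g f i, f l⟫ / ‖g f i‖ ^ 2) • g f i := by
    simpa using gramSchmidt_def'' ℝ f l
  rw [starProjection_span_image_Iio]
  nth_rw 1 [hfl]
  rw [hsplit, sum_union hdisj]
  abel

theorem norm_sq_sub_starProjection_span_image_Iio [LocallyFiniteOrder ι] (f : ι → E) {j l : ι}
    (hjl : j ≤ l) :
    ‖f l - (span ℝ (f '' Set.Iio j)).starProjection (f l)‖ ^ 2 =
      ‖g f l‖ ^ 2 + ∑ i ∈ Ico j l, (⟪g f i, f l⟫ / ‖g f i‖ ^ 2) ^ 2 * ‖g f i‖ ^ 2 := by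
  have horth : ⟪g f l, ∑ i ∈ Ico j l, (⟪g f i, f l⟫ / ‖g f i‖ ^ 2) • g f i⟫ = 0 :=
    inner_sum_smul_of_pairwise_inner_eq_zero_of_notMem (gramSchmidt_pairwise_orthogonal ℝ f) _
      (by simp)
  rw [sub_starProjection_span_image_Iio f hjl, norm_add_pow_two_real, horth, mul_zero, add_zero,
    norm_sq_sum_smul_of_pairwise_inner_eq_zero (gramSchmidt_pairwise_orthogonal ℝ f)]

end GramSchmidt

section GramDeterminant

open Matrix

variable {ι κ E : Type*} [NormedAddCommGroup E] [InnerProductSpace ℝ E]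

theorem gram_sum_smul [Fintype ι] (L : Matrix κ ι ℝ) (w : ι → E) :
    gram ℝ (fun a => ∑ i, L a i • w i) = L * gram ℝ w * Lᵀ := by
  ext a b
  simp only [gram_apply, sum_inner, inner_sum, inner_smul_left, inner_smul_right, conj_trivial,
    mul_apply, transpose_apply, sum_mul, mul_sum]
  exact sum_congr rfl fun i _ => sum_congr rfl fun k _ => by ring

theorem gram_eq_diagonal_of_pairwise_inner_eq_zero [DecidableEq ι] {w : ι → E}
    (hw : Pairwise fun i j => ⟪w i, w j⟫ = 0) : gram ℝ w = diagonal fun i => ‖w i‖ ^ 2 := by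
  ext a b
  by_cases hab : a = b
  · rw [hab, gram_apply, diagonal_apply_eq, real_inner_self_eq_norm_sq]
  · rw [gram_apply, diagonal_apply_ne _ hab, hw hab]

theorem det_gram_eq_prod_norm_sq_gramSchmidt [LinearOrder ι] [LocallyFiniteOrderBot ι]
    [WellFoundedLT ι] [Fintype ι] (f : ι → E) :
    (gram ℝ f).det = ∏ i, ‖gramSchmidt ℝ f i‖ ^ 2 := by
  -- `gramSchmidt_def''` writes `f` in the basis `gramSchmidt ℝ f` with a unitriangular matrix.
  set L : Matrix ι ι ℝ := 1 + of fun a i =>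
    if i < a then ⟪gramSchmidt ℝ f i, f a⟫ / ‖gramSchmidt ℝ f i‖ ^ 2 else 0
  have hL : L.IsLowerTriangular := fun a i (hai : a < i) => by
    simp [L, hai.ne, not_lt_of_gt hai]
  have hf : f = fun a => ∑ i, L a i • gramSchmidt ℝ f i := by
    funext a
    simpa [L, one_apply, add_smul, sum_add_distrib, ite_smul, sum_ite, filter_gt_eq_Iio] using
      gramSchmidt_def'' ℝ f a
  nth_rw 1 [hf]
  rw [gram_sum_smul, gram_eq_diagonal_of_pairwise_inner_eq_zero
    (gramSchmidt_pairwise_orthogonal ℝ f), det_mul, det_mul, det_transpose,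
    det_of_isLowerTriangular L hL, det_diagonal]
  simp [L]

end GramDeterminant

theorem Fin.prod_prod_Iic_eq_prod_pow {n : ℕ} {M : Type*} [CommMonoid M] (a : Fin n → M) :
    ∏ k, ∏ i ∈ Iic k, a i = ∏ i, a i ^ (n - i) := by
  rw [prod_comm' (t' := univ) (s' := Ici) (by simp)]
  simp [Fin.card_Ici]

section PrefixGramDet

open Matrix

variable {n : ℕ} {E : Type*} [NormedAddCommGroup E] [InnerProductSpace ℝ E]

theorem gramSchmidt_comp_castLE [FiniteDimensional ℝ E] {k : ℕ} (f : Fin n → E) (h : k ≤ n)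
    (i : Fin k) : gramSchmidt ℝ (f ∘ Fin.castLE h) i = gramSchmidt ℝ f (Fin.castLE h i) := by
  have himage : Fin.castLE h '' Set.Iio i = Set.Iio (Fin.castLE h i) := by
    simpa only [coe_image, coe_Iio] using congrArg ((↑) : Finset (Fin n) → Set (Fin n))
      (Fin.finsetImage_castLE_Iio (a := i) h)
  rw [gramSchmidt_eq_sub_starProjection, gramSchmidt_eq_sub_starProjection, Set.image_comp,
    himage, Function.comp_apply]

noncomputable def prefixGramDet (f : Fin n → E) (k : Fin n) : ℝ :=
  (gram ℝ (f ∘ Fin.castLE k.isLt)).det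

theorem prefixGramDet_eq_prod [FiniteDimensional ℝ E] (f : Fin n → E) (k : Fin n) :
    prefixGramDet f k = ∏ i ∈ Iic k, ‖gramSchmidt ℝ f i‖ ^ 2 := by
  have hIic : univ.map (Fin.castLEEmb k.isLt) = Iic k := by
    ext i
    simp only [mem_map, mem_univ, true_and, mem_Iic, Fin.castLEEmb_apply, Fin.le_def]
    exact ⟨by rintro ⟨j, rfl⟩; exact Nat.lt_succ_iff.1 j.isLt,
      fun hi => ⟨⟨i, Nat.lt_succ_of_le hi⟩, rfl⟩⟩
  rw [prefixGramDet, det_gram_eq_prod_norm_sq_gramSchmidt, ← hIic, prod_map]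
  simp only [gramSchmidt_comp_castLE, Fin.castLEEmb_apply]

theorem prefixGramDet_comp_swap (f : Fin n → E) (j : Fin n) (hj : j.val + 1 < n) {k : Fin n}
    (hkj : k ≠ j) :
    prefixGramDet (f ∘ Equiv.swap j ⟨j + 1, hj⟩) k = prefixGramDet f k := by
  rcases lt_or_gt_of_ne hkj with hkj | hjk
  · have hfix : Equiv.swap j ⟨j + 1, hj⟩ ∘ Fin.castLE k.isLt = Fin.castLE k.isLt :=
      funext fun a => Equiv.swap_apply_of_ne_of_ne (Fin.ne_of_lt (a.isLt.trans_le hkj))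
        (Fin.ne_of_lt (Nat.lt_succ_of_lt (a.isLt.trans_le hkj)))
    rw [prefixGramDet, Function.comp_assoc, hfix, prefixGramDet]
  · have hjk : j.val + 1 < k.val + 1 := Nat.succ_lt_succ hjk
    have hswap : Equiv.swap j ⟨j + 1, hj⟩ ∘ Fin.castLE k.isLt =
        Fin.castLE k.isLt ∘ Equiv.swap ⟨j, by omega⟩ ⟨j + 1, hjk⟩ :=
      funext <| (Fin.castLE_injective k.isLt).swap_apply (⟨j, by omega⟩ : Fin (k + 1)) ⟨j + 1, hjk⟩
    rw [prefixGramDet, Function.comp_assoc, hswap, ← Function.comp_assoc]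
    exact det_submatrix_equiv_self _ (gram ℝ (f ∘ Fin.castLE k.isLt))

end PrefixGramDet

section InsertFam

variable {n : ℕ} {α : Type*} (b : Fin n → α)

theorem insertFam_of_lt {k : Fin n} (l : Fin n) {i : Fin n} (hi : i < k) :
    insertFam b k l i = b i :=
  if_pos (Or.inl hi)

theorem insertFam_apply_self {k l : Fin n} (hkl : k ≤ l) : insertFam b k l k = b l := by
  simp [insertFam, not_lt.2 hkl]

theorem insertFam_self (l : Fin n) : insertFam b l l = b := by
  funext i
  rcases lt_trichotomy i l with h | rfl | h
  · exact insertFam_of_lt b l h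
  · exact insertFam_apply_self b le_rfl
  · exact if_pos (Or.inr h)

theorem insertFam_eq_comp_swap_s6 {j l : Fin n} (hjl : j < l) (hj : j.val + 1 < n) :
    insertFam b j l = insertFam b ⟨j + 1, hj⟩ l ∘ Equiv.swap j ⟨j + 1, hj⟩ := by
  set j' : Fin n := ⟨j + 1, hj⟩
  have hj' : j'.val = j.val + 1 := rfl
  have hjl : j.val < l.val := hjl
  funext i
  simp only [insertFam, Function.comp_apply, Equiv.swap_apply_def, Fin.ext_iff]
  split_ifs <;> first | rfl | omega | (congr 1; ext; simp only; omega)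

end InsertFam

section Potential

variable {n m : ℕ}

theorem projPerp_congr {b b' : Fin n → EuclideanSpace ℝ (Fin m)} {j : ℕ}
    (h : ∀ i : Fin n, (i : ℕ) < j → b i = b' i) : projPerp b j = projPerp b' j := by
  have himage : b '' {i | (i : ℕ) < j} = b' '' {i | (i : ℕ) < j} := Set.image_congr h
  unfold projPerp
  congr!

theorem bstar_congr {b b' : Fin n → EuclideanSpace ℝ (Fin m)} {i : Fin n}
    (h : ∀ x ≤ i, b x = b' x) : bstar b i = bstar b' i := by
  rw [bstar, bstar, projPerp_congr fun x hx => h x (le_of_lt hx), h i le_rfl]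

theorem bstar_eq_gramSchmidt (b : Fin n → EuclideanSpace ℝ (Fin m)) (i : Fin n) :
    bstar b i = gramSchmidt ℝ b i :=
  (gramSchmidt_eq_sub_starProjection b i).symm

theorem bstar_insertFam_self (b : Fin n → EuclideanSpace ℝ (Fin m)) {k l : Fin n}
    (hkl : k ≤ l) : bstar (insertFam b k l) k = projPerp b k (b l) := by
  rw [bstar, insertFam_apply_self b hkl, projPerp_congr fun i hi => insertFam_of_lt b l hi]

theorem norm_sq_projPerp (b : Fin n → EuclideanSpace ℝ (Fin m)) {j l : Fin n} (hjl : j ≤ l) :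
    ‖projPerp b j (b l)‖ ^ 2 =
      ‖bstar b l‖ ^ 2 + ∑ i ∈ Ico j l, mu b l i ^ 2 * ‖bstar b i‖ ^ 2 := by
  have hmu : ∀ i, mu b l i = ⟪gramSchmidt ℝ b i, b l⟫ / ‖gramSchmidt ℝ b i‖ ^ 2 := fun i => by
    rw [mu, bstar_eq_gramSchmidt, real_inner_comm, real_inner_self_eq_norm_sq]
  simp only [hmu, bstar_eq_gramSchmidt]
  exact norm_sq_sub_starProjection_span_image_Iio b hjl

theorem Pot_eq_prod_prefixGramDet (b : Fin n → EuclideanSpace ℝ (Fin m)) :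
    Pot b = ∏ k, prefixGramDet b k := by
  simp only [prefixGramDet_eq_prod, Fin.prod_prod_Iic_eq_prod_pow, Pot, bstar_eq_gramSchmidt,
    pow_mul]

theorem Pot_comp_swap_mul_s6 (b : Fin n → EuclideanSpace ℝ (Fin m)) (j : Fin n)
    (hj : j.val + 1 < n) :
    Pot (b ∘ Equiv.swap j ⟨j + 1, hj⟩) * ‖bstar b j‖ ^ 2 =
      Pot b * ‖bstar (b ∘ Equiv.swap j ⟨j + 1, hj⟩) j‖ ^ 2 := by
  set c := b ∘ Equiv.swap j ⟨j + 1, hj⟩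
  have hbelow : ∏ i ∈ Iio j, ‖bstar c i‖ ^ 2 = ∏ i ∈ Iio j, ‖bstar b i‖ ^ 2 :=
    prod_congr rfl fun i hi => by
      congr 2
      exact bstar_congr fun x hx => congrArg b <| Equiv.swap_apply_of_ne_of_ne
        (hx.trans_lt (mem_Iio.1 hi)).ne
        (Fin.ne_of_lt (Nat.lt_succ_of_lt (hx.trans_lt (mem_Iio.1 hi))))
  have hfactor : ∀ e : Fin n → EuclideanSpace ℝ (Fin m),
      prefixGramDet e j = (∏ i ∈ Iio j, ‖bstar e i‖ ^ 2) * ‖bstar e j‖ ^ 2 := fun e => by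
    rw [prefixGramDet_eq_prod, ← Iio_insert, prod_insert notMem_Iio_self,
      mul_comm (‖gramSchmidt ℝ e j‖ ^ 2)]
    simp only [bstar_eq_gramSchmidt]
  rw [Pot_eq_prod_prefixGramDet, Pot_eq_prod_prefixGramDet, ← mul_prod_erase univ _ (mem_univ j),
    ← mul_prod_erase univ _ (mem_univ j),
    prod_congr rfl fun k hk => prefixGramDet_comp_swap b j hj (ne_of_mem_erase hk), hfactor,
    hfactor, hbelow]
  ring

end Potential

/-- the quotients P_{j,ℓ} = Pot(σ_{j,ℓ}B)/Pot(B) satisfy P_{ℓ,ℓ} = 1 and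
P_{j,ℓ} = P_{j+1,ℓ} · (‖b_ℓ^*‖² + ∑_{i=j}^{ℓ-1} μ_{ℓ,i}²‖b_i^*‖²)/‖b_j^*‖² for j < ℓ. -/
theorem P_recursion {n m : ℕ} (b : Fin n → EuclideanSpace ℝ (Fin m))
    (hLI : LinearIndependent ℝ b) (l : Fin n) :
    Pot (insertFam b l l) / Pot b = 1 ∧
    ∀ j : Fin n, (hj : j < l) →
      Pot (insertFam b j l) / Pot b =
        (Pot (insertFam b ⟨j.val + 1, Nat.lt_of_le_of_lt (Nat.succ_le_of_lt hj) l.isLt⟩ l) / Pot b) *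
          ((‖bstar b l‖ ^ 2 + ∑ i ∈ Finset.Ico j l, (mu b l i) ^ 2 * ‖bstar b i‖ ^ 2) /
            ‖bstar b j‖ ^ 2) := by
  have hbstar : ∀ i, ‖bstar b i‖ ^ 2 ≠ 0 := fun i => pow_ne_zero _ <| norm_ne_zero_iff.2 <|
    bstar_eq_gramSchmidt b i ▸ gramSchmidt_ne_zero i hLI
  have hPot : Pot b ≠ 0 := prod_ne_zero_iff.2 fun i _ => by
    rw [pow_mul]
    exact pow_ne_zero _ (hbstar i)
  refine ⟨by rw [insertFam_self, div_self hPot], fun j hj => ?_⟩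
  have hj' : j.val + 1 < n := Nat.lt_of_le_of_lt (Nat.succ_le_of_lt hj) l.isLt
  set c := insertFam b ⟨j + 1, hj'⟩ l
  have hcj : bstar c j = bstar b j :=
    bstar_congr fun x hx => insertFam_of_lt b l (Nat.lt_succ_of_le hx)
  have key := Pot_comp_swap_mul_s6 c j hj'
  rw [← insertFam_eq_comp_swap_s6 b hj hj', hcj, bstar_insertFam_self b hj.le] at key
  rw [← norm_sq_projPerp b hj.le, div_mul_div_comm,
    div_eq_div_iff hPot (mul_ne_zero hPot (hbstar j))]
  linear_combination Pot b * key
end
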